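/- If a finite group H has a cyclic Sylow 2-subgroup of order at least 2, then H has a normal subgroup of index 2; in particular, a finite group of even order with cyclic Sylow 2-subgroups is not simple unless it has order 2. -/

import Mathlib

/-!
Let `P` be a cyclic Sylow `p`-subgroup of `G` with `p` the smallest prime dividing `|G|`.
`N(P)/C(P)` embeds in `Aut P`, of order `p^(k-1)(p-1)`, while its order divides `|G : P|`
(prime to `p`) and `|G|` (whose prime factors are all too large to divide `p - 1`); so `P` is
central in its normalizer and Burnside's transfer theorem gives a normal complement `K`.
Then `G ⧸ K` is a `p`-group of order `|P|`, so it has a subgroup of index `p`, whose preimage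
in `G` has index `p = minFac |G|` and is therefore normal.
-/

open Subgroup

theorem Subgroup.exists_index_eq_prime_of_card_eq_pow {G : Type*} [Group G] [Finite G]
    {p n : ℕ} [Fact p.Prime] (hG : Nat.card G = p ^ n) (hn : n ≠ 0) :
    ∃ L : Subgroup G, L.index = p := by
  obtain ⟨L, hL⟩ := Sylow.exists_subgroup_card_pow_prime (G := G) p (n := n - 1)
    (hG ▸ pow_dvd_pow p (Nat.sub_le n 1))
  refine ⟨L, Nat.eq_of_mul_eq_mul_left (pow_pos (Fact.out : p.Prime).pos (n - 1)) ?_⟩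
  rw [← hL, card_mul_index, hG, hL, ← pow_succ, Nat.sub_add_cancel (Nat.one_le_iff_ne_zero.2 hn)]

theorem IsCyclic.exists_normal_index_eq_minFac {G : Type*} [Group G] [Finite G] {p : ℕ}
    (hp : (Nat.card G).minFac = p) {P : Sylow p G} (hP : IsCyclic P) (hP1 : Nat.card P ≠ 1) :
    ∃ N : Subgroup G, N.Normal ∧ N.index = p := by
  have hG1 : Nat.card G ≠ 1 := fun h ↦
    hP1 (Nat.eq_one_of_dvd_one (h ▸ card_subgroup_dvd_card (P : Subgroup G)))
  have : Fact p.Prime := ⟨hp ▸ Nat.minFac_prime hG1⟩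
  set K := (MonoidHom.transferSylow P (hP.normalizer_le_centralizer hp)).ker
  have hQ : Nat.card (G ⧸ K) = Nat.card P := by
    rw [← index_eq_card, (hP.isComplement' hp).symm.index_eq_card]
  obtain ⟨n, hn⟩ := P.2.exists_card_eq
  obtain ⟨L, hL⟩ := exists_index_eq_prime_of_card_eq_pow (hQ.trans hn)
    (by rintro rfl; exact hP1 hn)
  have hLG : (L.comap (QuotientGroup.mk' K)).index = p := by
    rw [index_comap_of_surjective _ (QuotientGroup.mk'_surjective K), hL]
  exact ⟨_, normal_of_index_eq_minFac_card (hLG.trans hp.symm), hLG⟩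

theorem IsSimpleGroup.index_eq_card_of_ne_top {G : Type*} [Group G] [IsSimpleGroup G]
    {N : Subgroup G} (hN : N.Normal) (hN_top : N ≠ ⊤) : N.index = Nat.card G := by
  rw [(IsSimpleGroup.eq_bot_or_eq_top_of_normal N hN).resolve_right hN_top, index_bot]

theorem stmt5 {H : Type*} [Group H] [Finite H] (S : Sylow 2 H)
    (hcyc : IsCyclic S) (hS : 2 ≤ Nat.card S) :
    (∃ N : Subgroup H, N.Normal ∧ N.index = 2) ∧
      (IsSimpleGroup H → Nat.card H = 2) := by
  have hS2 : 2 ∣ Nat.card S := S.2.card_eq_or_dvd.resolve_left (by omega)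
  have hmin : (Nat.card H).minFac = 2 :=
    (Nat.minFac_eq_two_iff _).2 (hS2.trans (card_subgroup_dvd_card _))
  obtain ⟨N, hN, hN2⟩ := hcyc.exists_normal_index_eq_minFac hmin (by omega)
  refine ⟨⟨N, hN, hN2⟩, fun _ ↦ ?_⟩
  have hN_top : N ≠ ⊤ := by rintro rfl; simp at hN2
  rw [← IsSimpleGroup.index_eq_card_of_ne_top hN hN_top, hN2]
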